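/- arXiv:1405.4688 — 2 statements merged into one kernel-verified Lean document; each statement's English description precedes it below -/
import Mathlib

section
/- Let 0 < p ≤ 1 and λ ∈ [0,1]. The perspective map (A, B, C) ↦ C^{1/2} (C^{-1/2}(λA + (1-λ)B)C^{-1/2})^p C^{1/2} is jointly concave on triples of n×n positive definite complex matrices: for positive definite triples (A₁,B₁,C₁), (A₂,B₂,C₂) and α ∈ [0,1], with (A,B,C) = α(A₁,B₁,C₁) + (1-α)(A₂,B₂,C₂) taken entrywise, C^{1/2}(C^{-1/2}(λA+(1-λ)B)C^{-1/2})^p C^{1/2} ≥ α C₁^{1/2}(C₁^{-1/2}(λA₁+(1-λ)B₁)C₁^{-1/2})^p C₁^{1/2} + (1-α) C₂^{1/2}(C₂^{-1/2}(λA₂+(1-λ)B₂)C₂^{-1/2})^p C₂^{1/2} in the Loewner order. -/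
open Matrix
open scoped ComplexOrder

/-- Matrix power by a real exponent via the functional calculus
(unitary diagonalization for Hermitian matrices; junk value otherwise). -/
noncomputable def mpow {n : ℕ} (A : Matrix (Fin n) (Fin n) ℂ) (q : ℝ) :
    Matrix (Fin n) (Fin n) ℂ :=
  if hA : A.IsHermitian then
    (hA.eigenvectorUnitary : Matrix (Fin n) (Fin n) ℂ) *
      Matrix.diagonal (fun i => ((hA.eigenvalues i ^ q : ℝ) : ℂ)) *
      (star (hA.eigenvectorUnitary : Matrix (Fin n) (Fin n) ℂ))
  else 0

/-- The perspective map `(A,B,C) ↦ C^{1/2} (C^{-1/2}(λA + (1-λ)B)C^{-1/2})^p C^{1/2}`. -/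
noncomputable def persp {n : ℕ} (lam p : ℝ) (A B C : Matrix (Fin n) (Fin n) ℂ) :
    Matrix (Fin n) (Fin n) ℂ :=
  mpow C (1 / 2) *
    mpow (mpow C (-(1 / 2)) * (lam • A + (1 - lam) • B) * mpow C (-(1 / 2))) p *
      mpow C (1 / 2)

/-!
Write `C #ₜ M = C^{1/2} (C^{-1/2} M C^{-1/2})^t C^{1/2}` for the weighted geometric mean, so that
the perspective is `C #ₚ (λA + (1-λ)B)`; it suffices that `(C, M) ↦ C #ₜ M` is jointly concave for
`t ∈ [0,1]`. For `t = 0, 1` the map is linear. For `t = 1/2`, Ando's characterisation of `C # M` as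
the largest Hermitian `X` with `[[C, X], [X, M]] ≥ 0` gives both monotonicity and joint concavity
of `#`. The identity `C #_{(s+t)/2} M = (C #ₛ M) # (C #ₜ M)` then shows that the set of `t` for
which concavity holds is closed under midpoints; it is closed by continuity in `t`, hence it
contains `[0,1]`.
-/

-- Square complex matrices with the L2 operator norm are a C⋆-algebra; `A ^ (r : ℝ)` is `CFC.rpow`.
open scoped MatrixOrder Matrix.Norms.L2Operator

lemma IsClosed.Icc_subset_of_add_div_two_mem {S : Set ℝ} (hS : IsClosed S) {a b : ℝ}
    (ha : a ∈ S) (hb : b ∈ S) (hmid : ∀ x ∈ S, ∀ y ∈ S, (x + y) / 2 ∈ S) : Set.Icc a b ⊆ S := by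
  rintro p ⟨hap, hpb⟩
  have hlo : sSup (S ∩ Set.Icc a p) ∈ S ∩ Set.Icc a p :=
    (hS.inter isClosed_Icc).csSup_mem ⟨a, ha, le_rfl, hap⟩ ⟨p, fun z hz => hz.2.2⟩
  have hhi : sInf (S ∩ Set.Icc p b) ∈ S ∩ Set.Icc p b :=
    (hS.inter isClosed_Icc).csInf_mem ⟨b, hb, hpb, le_rfl⟩ ⟨p, fun z hz => hz.2.1⟩
  set x := sSup (S ∩ Set.Icc a p)
  set y := sInf (S ∩ Set.Icc p b)
  -- `x ≤ p ≤ y` are the points of `S` nearest to `p`; their midpoint lies in `S` and between them.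
  have hxy := hmid x hlo.1 y hhi.1
  rcases le_total ((x + y) / 2) p with h | h
  · have : (x + y) / 2 ≤ x :=
      le_csSup ⟨p, fun z hz => hz.2.2⟩ ⟨hxy, by linarith [hlo.2.1, hhi.2.1], h⟩
    have hpx : p = x := by linarith [hlo.2.2, hhi.2.1]
    exact hpx ▸ hlo.1
  · have : y ≤ (x + y) / 2 :=
      csInf_le ⟨p, fun z hz => hz.2.1⟩ ⟨hxy, h, by linarith [hlo.2.2, hhi.2.2]⟩
    have hpy : p = y := by linarith [hlo.2.2, hhi.2.1]
    exact hpy ▸ hhi.1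

lemma IsSelfAdjoint.le_of_mul_self_le_mul_self {A : Type*} [CStarAlgebra A] [PartialOrder A]
    [StarOrderedRing A] {T Y : A} (hY : IsSelfAdjoint Y) (hT : 0 ≤ T) (h : Y * Y ≤ T * T) :
    Y ≤ T :=
  calc Y ≤ CFC.abs Y := by
        rw [← sub_nonneg, CFC.abs_sub_self Y hY]
        exact smul_nonneg zero_le_two (CFC.negPart_nonneg Y)
    _ = CFC.sqrt (Y * Y) := by rw [CFC.abs, hY.star_eq]
    _ ≤ CFC.sqrt (T * T) := CFC.sqrt_le_sqrt _ _ h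
    _ = T := CFC.sqrt_mul_self T hT

namespace Matrix

variable {m : Type*}

lemma convex_setOf_posDef : Convex ℝ {A : Matrix m m ℂ | A.PosDef} := by
  intro A hA B hB a b ha hb hab
  rcases ha.eq_or_lt with rfl | ha
  · simpa [show b = 1 by linarith] using hB
  · exact (hA.smul ha).add_posSemidef (hB.posSemidef.smul hb)

abbrev posDefPairs (m : Type*) : Set (Matrix m m ℂ × Matrix m m ℂ) :=
  {A | A.PosDef} ×ˢ {B | B.PosDef}

lemma convex_posDefPairs : Convex ℝ (posDefPairs m) :=
  convex_setOf_posDef.prod convex_setOf_posDef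

variable [Fintype m] [DecidableEq m]

lemma PosSemidef.fromBlocks_zero {n : Type*} [Fintype n] [DecidableEq n] {P : Matrix m m ℂ}
    {Q : Matrix n n ℂ} (hP : P.PosSemidef) (hQ : Q.PosSemidef) :
    (fromBlocks P 0 0 Q).PosSemidef := by
  obtain ⟨L, rfl⟩ := CStarAlgebra.nonneg_iff_eq_star_mul_self.mp hP.nonneg
  obtain ⟨K, rfl⟩ := CStarAlgebra.nonneg_iff_eq_star_mul_self.mp hQ.nonneg
  have : fromBlocks (star L * L) 0 0 (star K * K) =
      (fromBlocks L 0 0 K)ᴴ * fromBlocks L 0 0 K := by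
    simp [fromBlocks_conjTranspose, fromBlocks_multiply, star_eq_conjTranspose]
  rw [this]
  exact posSemidef_conjTranspose_mul_self _

namespace PosDef

variable {A : Matrix m m ℂ} (hA : A.PosDef)
include hA

lemma rpow (r : ℝ) : (A ^ r).PosDef :=
  (hA.isStrictlyPositive.rpow A r).posDef

lemma rpow_mul_mul_rpow {B : Matrix m m ℂ} (hB : B.PosDef) (r : ℝ) :
    (A ^ r * B * A ^ r).PosDef := by
  have h := (IsUnit.posDef_star_right_conjugate_iff (x := B) (hA.rpow r).isUnit).mpr hB
  rwa [(hA.rpow r).isHermitian.star_eq] at h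

lemma rpow_half_mul_rpow_half : A ^ (1 / 2 : ℝ) * A ^ (1 / 2 : ℝ) = A := by
  rw [← CFC.rpow_add hA.isUnit, add_halves, CFC.rpow_one A hA.posSemidef.nonneg]

lemma rpow_half_mul_rpow_neg_half : A ^ (1 / 2 : ℝ) * A ^ (-(1 / 2) : ℝ) = 1 :=
  CFC.rpow_mul_rpow_neg _ hA.isStrictlyPositive

lemma rpow_neg_half_mul_rpow_half : A ^ (-(1 / 2) : ℝ) * A ^ (1 / 2 : ℝ) = 1 :=
  CFC.rpow_neg_mul_rpow _ hA.isStrictlyPositive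

lemma rpow_neg_half_mul_rpow_neg_half : A ^ (-(1 / 2) : ℝ) * A ^ (-(1 / 2) : ℝ) = A⁻¹ := by
  rw [← CFC.rpow_add hA.isUnit, nonsing_inv_eq_ringInverse,
    CFC.inverse_eq_rpow_neg_one hA.isStrictlyPositive]
  norm_num

lemma rpow_half_sandwich_cancel (X : Matrix m m ℂ) :
    A ^ (1 / 2 : ℝ) * (A ^ (-(1 / 2) : ℝ) * X * A ^ (-(1 / 2) : ℝ)) * A ^ (1 / 2 : ℝ) = X := by
  simp only [← mul_assoc, hA.rpow_half_mul_rpow_neg_half, one_mul]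
  rw [mul_assoc, hA.rpow_neg_half_mul_rpow_half, mul_one]

lemma continuous_rpow : Continuous fun r : ℝ => A ^ r := by
  have h (r : ℝ) : A ^ r = hA.isHermitian.cfc (· ^ r) := by
    rw [CFC.rpow_eq_cfc_real hA.posSemidef.nonneg, hA.isHermitian.cfc_eq]
  simp only [h, IsHermitian.cfc, Unitary.conjStarAlgAut_apply]
  refine (continuous_const.matrix_mul (Continuous.matrix_diagonal ?_)).matrix_mul continuous_const
  exact continuous_pi fun i => Complex.continuous_ofReal.comp
    (Real.continuous_const_rpow (hA.eigenvalues_pos i).ne')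

end PosDef

noncomputable def weightedGeomMean (t : ℝ) (A B : Matrix m m ℂ) : Matrix m m ℂ :=
  A ^ (1 / 2 : ℝ) * (A ^ (-(1 / 2) : ℝ) * B * A ^ (-(1 / 2) : ℝ)) ^ t * A ^ (1 / 2 : ℝ)

noncomputable abbrev geomMean (A B : Matrix m m ℂ) : Matrix m m ℂ := weightedGeomMean (1 / 2) A B

section weightedGeomMean

variable {A B : Matrix m m ℂ}

lemma PosDef.weightedGeomMean (hA : A.PosDef) (hB : B.PosDef) (t : ℝ) :
    (weightedGeomMean t A B).PosDef :=
  hA.rpow_mul_mul_rpow ((hA.rpow_mul_mul_rpow hB _).rpow t) _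

lemma weightedGeomMean_zero (hA : A.PosDef) (hB : B.PosDef) : weightedGeomMean 0 A B = A := by
  rw [weightedGeomMean, CFC.rpow_zero _ (hA.rpow_mul_mul_rpow hB _).posSemidef.nonneg, mul_one,
    hA.rpow_half_mul_rpow_half]

lemma weightedGeomMean_one (hA : A.PosDef) (hB : B.PosDef) : weightedGeomMean 1 A B = B := by
  rw [weightedGeomMean, CFC.rpow_one _ (hA.rpow_mul_mul_rpow hB _).posSemidef.nonneg,
    hA.rpow_half_sandwich_cancel]

lemma continuous_weightedGeomMean (hA : A.PosDef) (hB : B.PosDef) :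
    Continuous fun t => weightedGeomMean t A B :=
  (continuous_const.mul (hA.rpow_mul_mul_rpow hB _).continuous_rpow).mul continuous_const

lemma geomMean_mul_inv_mul_geomMean (hA : A.PosDef) (hB : B.PosDef) :
    geomMean A B * A⁻¹ * geomMean A B = B := by
  set S := A ^ (1 / 2 : ℝ)
  set R := A ^ (-(1 / 2) : ℝ)
  set V := (R * B * R) ^ (1 / 2 : ℝ)
  have hVV : V * V = R * B * R := (hA.rpow_mul_mul_rpow hB _).rpow_half_mul_rpow_half
  calc S * V * S * A⁻¹ * (S * V * S) = S * V * (S * R) * (R * S) * V * S := by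
        rw [← hA.rpow_neg_half_mul_rpow_neg_half]; noncomm_ring
    _ = S * (V * V) * S := by
        rw [hA.rpow_half_mul_rpow_neg_half, hA.rpow_neg_half_mul_rpow_half]; noncomm_ring
    _ = B := by rw [hVV, hA.rpow_half_sandwich_cancel]

lemma eq_geomMean_of_mul_inv_mul {G : Matrix m m ℂ} (hA : A.PosDef) (hG : G.PosDef)
    (h : G * A⁻¹ * G = B) : G = geomMean A B := by
  set R := A ^ (-(1 / 2) : ℝ)
  have hY : (R * G * R).PosDef := hA.rpow_mul_mul_rpow hG _
  have hYY : (R * G * R) * (R * G * R) = R * B * R := by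
    rw [← h, ← hA.rpow_neg_half_mul_rpow_neg_half]; noncomm_ring
  have hsqrt : (R * B * R) ^ (1 / 2 : ℝ) = R * G * R := by
    rw [← CFC.sqrt_eq_rpow, CFC.sqrt_unique hYY hY.posSemidef.nonneg]
  rw [geomMean, weightedGeomMean, hsqrt, hA.rpow_half_sandwich_cancel]

lemma weightedGeomMean_add_div_two (hA : A.PosDef) (hB : B.PosDef) (s t : ℝ) :
    weightedGeomMean ((s + t) / 2) A B =
      geomMean (weightedGeomMean s A B) (weightedGeomMean t A B) := by
  have hW := hA.rpow_mul_mul_rpow hB (-(1 / 2))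
  refine eq_geomMean_of_mul_inv_mul (hA.weightedGeomMean hB s) (hA.weightedGeomMean hB _) ?_
  set S := A ^ (1 / 2 : ℝ)
  set R := A ^ (-(1 / 2) : ℝ)
  set W := R * B * R
  have hSR : S * R = 1 := hA.rpow_half_mul_rpow_neg_half
  have hRS : R * S = 1 := hA.rpow_neg_half_mul_rpow_half
  have hinv : (S * W ^ s * S)⁻¹ = R * W ^ (-s) * R := by
    refine inv_eq_left_inv ?_
    calc R * W ^ (-s) * R * (S * W ^ s * S) = R * (W ^ (-s) * (R * S) * W ^ s) * S := by
          noncomm_ring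
      _ = 1 := by
          rw [hRS, mul_one, ← CFC.rpow_add hW.isUnit, neg_add_cancel,
            CFC.rpow_zero _ hW.posSemidef.nonneg, mul_one, hRS]
  simp only [weightedGeomMean]
  rw [hinv]
  calc S * W ^ ((s + t) / 2) * S * (R * W ^ (-s) * R) * (S * W ^ ((s + t) / 2) * S)
      = S * (W ^ ((s + t) / 2) * (S * R) * W ^ (-s) * (R * S) * W ^ ((s + t) / 2)) * S := by
        noncomm_ring
    _ = S * W ^ t * S := by
        rw [hSR, hRS, mul_one, mul_one, ← CFC.rpow_add hW.isUnit, ← CFC.rpow_add hW.isUnit]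
        ring_nf

lemma fromBlocks_geomMean_posSemidef (hA : A.PosDef) (hB : B.PosDef) :
    (fromBlocks A (geomMean A B) (geomMean A B) B).PosSemidef := by
  have := hA.isUnit.invertible
  have hG := (hA.weightedGeomMean hB (1 / 2)).isHermitian.eq
  have h := (PosDef.fromBlocks₁₁ (geomMean A B) B hA).mpr
  rw [hG, geomMean_mul_inv_mul_geomMean hA hB, sub_self] at h
  exact h .zero

lemma le_geomMean_of_fromBlocks_posSemidef {X : Matrix m m ℂ} (hA : A.PosDef) (hB : B.PosDef)
    (hX : X.IsHermitian) (h : (fromBlocks A X X B).PosSemidef) : X ≤ geomMean A B := by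
  have := hA.isUnit.invertible
  have hschur : X * A⁻¹ * X ≤ B := by
    have h' := (PosDef.fromBlocks₁₁ X B hA).mp (by rwa [hX.eq])
    rwa [hX.eq] at h'
  set S := A ^ (1 / 2 : ℝ)
  set R := A ^ (-(1 / 2) : ℝ)
  set V := (R * B * R) ^ (1 / 2 : ℝ)
  have hR : star R = R := (hA.rpow _).isHermitian.eq
  have hS : star S = S := (hA.rpow _).isHermitian.eq
  have hRXR : (R * X * R).IsHermitian := by
    have h := isHermitian_conjTranspose_mul_mul R hX
    rwa [← star_eq_conjTranspose, hR] at h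
  have hsq : R * X * R * (R * X * R) ≤ V * V := by
    calc R * X * R * (R * X * R) = star R * (X * A⁻¹ * X) * R := by
          rw [hR, ← hA.rpow_neg_half_mul_rpow_neg_half]; noncomm_ring
      _ ≤ star R * B * R := star_left_conjugate_le_conjugate hschur R
      _ = V * V := by rw [hR, (hA.rpow_mul_mul_rpow hB _).rpow_half_mul_rpow_half]
  have hV : 0 ≤ V := ((hA.rpow_mul_mul_rpow hB _).rpow _).posSemidef.nonneg
  calc X = star S * (R * X * R) * S := by rw [hS, hA.rpow_half_sandwich_cancel]
    _ ≤ star S * V * S :=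
        star_left_conjugate_le_conjugate (hRXR.isSelfAdjoint.le_of_mul_self_le_mul_self hV hsq) S
    _ = geomMean A B := by rw [hS]; rfl

lemma geomMean_mono {A' B' : Matrix m m ℂ} (hA : A.PosDef) (hB : B.PosDef) (hAA' : A ≤ A')
    (hBB' : B ≤ B') : geomMean A B ≤ geomMean A' B' := by
  have hA' : A'.PosDef := add_sub_cancel A A' ▸ hA.add_posSemidef (le_iff.mp hAA')
  have hB' : B'.PosDef := add_sub_cancel B B' ▸ hB.add_posSemidef (le_iff.mp hBB')
  refine le_geomMean_of_fromBlocks_posSemidef hA' hB' (hA.weightedGeomMean hB _).isHermitian ?_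
  have : fromBlocks A' (geomMean A B) (geomMean A B) B' =
      fromBlocks A (geomMean A B) (geomMean A B) B + fromBlocks (A' - A) 0 0 (B' - B) := by
    simp [fromBlocks_add]
  rw [this]
  exact (fromBlocks_geomMean_posSemidef hA hB).add (PosSemidef.fromBlocks_zero hAA' hBB')

end weightedGeomMean

lemma concaveOn_geomMean : ConcaveOn ℝ (posDefPairs m) fun x => geomMean x.1 x.2 := by
  refine ⟨convex_posDefPairs, ?_⟩
  rintro ⟨A₁, B₁⟩ ⟨hA₁, hB₁⟩ ⟨A₂, B₂⟩ ⟨hA₂, hB₂⟩ a b ha hb hab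
  simp only [Prod.smul_mk, Prod.mk_add_mk]
  have hG₁ := hA₁.weightedGeomMean hB₁ (1 / 2)
  have hG₂ := hA₂.weightedGeomMean hB₂ (1 / 2)
  refine le_geomMean_of_fromBlocks_posSemidef (convex_setOf_posDef hA₁ hA₂ ha hb hab)
    (convex_setOf_posDef hB₁ hB₂ ha hb hab)
    ((hG₁.posSemidef.smul ha).add (hG₂.posSemidef.smul hb)).isHermitian ?_
  have h := ((fromBlocks_geomMean_posSemidef hA₁ hB₁).smul ha).add
    ((fromBlocks_geomMean_posSemidef hA₂ hB₂).smul hb)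
  rwa [fromBlocks_smul, fromBlocks_smul, fromBlocks_add] at h

lemma concaveOn_weightedGeomMean_add_div_two {s t : ℝ}
    (hs : ConcaveOn ℝ (posDefPairs m) fun x => weightedGeomMean s x.1 x.2)
    (ht : ConcaveOn ℝ (posDefPairs m) fun x => weightedGeomMean t x.1 x.2) :
    ConcaveOn ℝ (posDefPairs m) fun x => weightedGeomMean ((s + t) / 2) x.1 x.2 := by
  refine ⟨convex_posDefPairs, fun x hx y hy a b ha hb hab => ?_⟩
  have hxy := convex_posDefPairs hx hy ha hb hab
  have hpd (r : ℝ) {z : Matrix m m ℂ × Matrix m m ℂ} (hz : z ∈ posDefPairs m) :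
      (weightedGeomMean r z.1 z.2).PosDef := hz.1.weightedGeomMean hz.2 r
  simp only [weightedGeomMean_add_div_two hx.1 hx.2, weightedGeomMean_add_div_two hy.1 hy.2,
    weightedGeomMean_add_div_two hxy.1 hxy.2]
  calc _ ≤ geomMean (a • weightedGeomMean s x.1 x.2 + b • weightedGeomMean s y.1 y.2)
          (a • weightedGeomMean t x.1 x.2 + b • weightedGeomMean t y.1 y.2) :=
        concaveOn_geomMean.2 (x := (_, _)) (y := (_, _)) ⟨hpd s hx, hpd t hx⟩ ⟨hpd s hy, hpd t hy⟩
          ha hb hab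
    _ ≤ _ := geomMean_mono (convex_setOf_posDef (hpd s hx) (hpd s hy) ha hb hab)
          (convex_setOf_posDef (hpd t hx) (hpd t hy) ha hb hab)
          (hs.2 hx hy ha hb hab) (ht.2 hx hy ha hb hab)

lemma isClosed_setOf_concaveOn_weightedGeomMean :
    IsClosed {t : ℝ | ConcaveOn ℝ (posDefPairs m) fun x => weightedGeomMean t x.1 x.2} := by
  simp only [ConcaveOn, convex_posDefPairs, true_and, Set.ofPred_forall]
  refine isClosed_biInter fun x hx => isClosed_biInter fun y hy => isClosed_iInter fun a =>
    isClosed_iInter fun b => isClosed_iInter fun ha => isClosed_iInter fun hb =>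
      isClosed_iInter fun hab => isClosed_le ?_ ?_
  · exact ((continuous_weightedGeomMean hx.1 hx.2).const_smul a).add
      ((continuous_weightedGeomMean hy.1 hy.2).const_smul b)
  · have hxy := convex_posDefPairs hx hy ha hb hab
    exact continuous_weightedGeomMean hxy.1 hxy.2

theorem concaveOn_weightedGeomMean {t : ℝ} (ht₀ : 0 ≤ t) (ht₁ : t ≤ 1) :
    ConcaveOn ℝ (posDefPairs m) fun x => weightedGeomMean t x.1 x.2 := by
  refine isClosed_setOf_concaveOn_weightedGeomMean.Icc_subset_of_add_div_two_mem ?_ ?_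
    (fun s hs t ht => concaveOn_weightedGeomMean_add_div_two hs ht) ⟨ht₀, ht₁⟩
  · exact ((LinearMap.fst ℝ _ _).concaveOn convex_posDefPairs).congr
      fun x hx => (weightedGeomMean_zero hx.1 hx.2).symm
  · exact ((LinearMap.snd ℝ _ _).concaveOn convex_posDefPairs).congr
      fun x hx => (weightedGeomMean_one hx.1 hx.2).symm

end Matrix

lemma mpow_eq_rpow {n : ℕ} {A : Matrix (Fin n) (Fin n) ℂ} (hA : A.PosSemidef) (q : ℝ) :
    mpow A q = A ^ q := by
  rw [mpow, dif_pos hA.isHermitian, CFC.rpow_eq_cfc_real hA.nonneg, hA.isHermitian.cfc_eq,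
    IsHermitian.cfc, Unitary.conjStarAlgAut_apply]
  rfl

lemma persp_eq_weightedGeomMean {n : ℕ} {lam p : ℝ} {A B C : Matrix (Fin n) (Fin n) ℂ}
    (hC : C.PosDef) (hM : (lam • A + (1 - lam) • B).PosDef) :
    persp lam p A B C = weightedGeomMean p C (lam • A + (1 - lam) • B) := by
  simp only [persp, mpow_eq_rpow hC.posSemidef,
    mpow_eq_rpow (hC.rpow_mul_mul_rpow hM _).posSemidef]
  rfl

theorem stmt9 {n : ℕ} (p lam : ℝ) (hp0 : 0 < p) (hp1 : p ≤ 1)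
    (hl0 : 0 ≤ lam) (hl1 : lam ≤ 1)
    (A₁ B₁ C₁ A₂ B₂ C₂ : Matrix (Fin n) (Fin n) ℂ)
    (hA₁ : A₁.PosDef) (hB₁ : B₁.PosDef) (hC₁ : C₁.PosDef)
    (hA₂ : A₂.PosDef) (hB₂ : B₂.PosDef) (hC₂ : C₂.PosDef)
    (α : ℝ) (hα0 : 0 ≤ α) (hα1 : α ≤ 1) :
    (persp lam p (α • A₁ + (1 - α) • A₂) (α • B₁ + (1 - α) • B₂)
        (α • C₁ + (1 - α) • C₂) -
      (α • persp lam p A₁ B₁ C₁ + (1 - α) • persp lam p A₂ B₂ C₂)).PosSemidef := by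
  have hM₁ : (lam • A₁ + (1 - lam) • B₁).PosDef :=
    convex_setOf_posDef hA₁ hB₁ hl0 (sub_nonneg.2 hl1) (add_sub_cancel lam 1)
  have hM₂ : (lam • A₂ + (1 - lam) • B₂).PosDef :=
    convex_setOf_posDef hA₂ hB₂ hl0 (sub_nonneg.2 hl1) (add_sub_cancel lam 1)
  have hα : α + (1 - α) = 1 := add_sub_cancel α 1
  have hC := convex_setOf_posDef hC₁ hC₂ hα0 (sub_nonneg.2 hα1) hα
  have hmix : lam • (α • A₁ + (1 - α) • A₂) + (1 - lam) • (α • B₁ + (1 - α) • B₂) =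
      α • (lam • A₁ + (1 - lam) • B₁) + (1 - α) • (lam • A₂ + (1 - lam) • B₂) := by
    module
  rw [persp_eq_weightedGeomMean hC₁ hM₁, persp_eq_weightedGeomMean hC₂ hM₂,
    persp_eq_weightedGeomMean hC (hmix ▸ convex_setOf_posDef hM₁ hM₂ hα0 (sub_nonneg.2 hα1) hα),
    hmix]
  exact (concaveOn_weightedGeomMean hp0.le hp1).2 (x := (C₁, _)) (y := (C₂, _))
    ⟨hC₁, hM₁⟩ ⟨hC₂, hM₂⟩ hα0 (sub_nonneg.2 hα1) hα
end

section
/- Let 0 < p ≤ 1 and let K be any fixed n×n complex matrix. The map (A, B) ↦ Re Tr(Kᴴ A^p K B^{1-p}) is jointly concave on pairs of n×n positive definite complex matrices: for positive definite A₁, A₂, B₁, B₂ and α ∈ [0,1], Re Tr(Kᴴ (αA₁+(1-α)A₂)^p K (αB₁+(1-α)B₂)^{1-p}) ≥ α Re Tr(Kᴴ A₁^p K B₁^{1-p}) + (1-α) Re Tr(Kᴴ A₂^p K B₂^{1-p}) (Lieb's concavity theorem). -/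
/-!
For `s > 0` the quantity `∑ᵢⱼ aᵢ bⱼ / (aᵢ + s bⱼ) |(U*KV)ᵢⱼ|²`, where `A = U diag(a) U*` and
`B = V diag(b) V*`, is the minimum over all splittings `K = X + Y` of
`Re Tr(Xᴴ X B) + s⁻¹ Re Tr(Yᴴ A Y)`: entrywise this is the elementary bound
`a b / (a + s b) |x + y|² ≤ b |x|² + s⁻¹ a |y|²`, with equality for suitable multiples of `x + y`.
Being a minimum of functions affine in `(A, B)`, it is jointly concave. Integrating the scalar
kernel against `s^(p-1) ds` on `(0, ∞)` gives a positive constant times `a^p b^(1-p)`, so the Lieb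
functional is a positive integral of concave functions. At `p = 1` the functional is linear.
-/

open Matrix
open scoped ComplexOrder

open MeasureTheory Set

section Scalar

variable {d e s : ℝ}

lemma parallel_sum_mul_norm_add_sq_le {E : Type*} [SeminormedAddCommGroup E]
    (hd : 0 < d) (he : 0 < e) (hs : 0 < s) (x y : E) :
    d * e / (d + s * e) * ‖x + y‖ ^ 2 ≤ e * ‖x‖ ^ 2 + s⁻¹ * (d * ‖y‖ ^ 2) := by
  have hsum : 0 < d + s * e := by positivity
  have htri : ‖x + y‖ ^ 2 ≤ (‖x‖ + ‖y‖) ^ 2 := by gcongr; exact norm_add_le x y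
  rw [div_mul_eq_mul_div, div_le_iff₀ hsum, ← mul_le_mul_iff_right₀ hs]
  have hexp : s * ((e * ‖x‖ ^ 2 + s⁻¹ * (d * ‖y‖ ^ 2)) * (d + s * e))
      = (s * e * ‖x‖ ^ 2 + d * ‖y‖ ^ 2) * (d + s * e) := by
    field_simp
  rw [hexp]
  nlinarith [sq_nonneg (s * e * ‖x‖ - d * ‖y‖), mul_le_mul_of_nonneg_left htri
    (by positivity : 0 ≤ s * d * e)]

lemma parallel_sum_mul_norm_sq_eq {E : Type*} [SeminormedAddCommGroup E] [NormedSpace ℝ E]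
    (hd : 0 < d) (he : 0 < e) (hs : 0 < s) (m : E) :
    e * ‖(d / (d + s * e)) • m‖ ^ 2 + s⁻¹ * (d * ‖(s * e / (d + s * e)) • m‖ ^ 2)
      = d * e / (d + s * e) * ‖m‖ ^ 2 := by
  have hsum : 0 < d + s * e := by positivity
  rw [norm_smul, norm_smul, Real.norm_of_nonneg (by positivity),
    Real.norm_of_nonneg (by positivity)]
  field_simp

end Scalar

lemma re_trace_conjTranspose_mul_diagonal_mul_mul_diagonal {ι : Type*} [Fintype ι]
    [DecidableEq ι] (M : Matrix ι ι ℂ) (f g : ι → ℝ) :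
    (trace (Mᴴ * diagonal (fun i => (f i : ℂ)) * M * diagonal (fun j => (g j : ℂ)))).re
      = ∑ i, ∑ j, f i * g j * ‖M i j‖ ^ 2 := by
  simp only [trace, diag_apply, mul_apply, diagonal_apply, conjTranspose_apply,
    RCLike.star_def, mul_ite, mul_zero, Finset.sum_ite_eq', Finset.mem_univ, if_true,
    Finset.sum_mul, Complex.re_sum]
  rw [Finset.sum_comm]
  refine Finset.sum_congr rfl fun i _ => Finset.sum_congr rfl fun j _ => ?_
  rw [show (starRingEnd ℂ) (M i j) * (f i : ℂ) * M i j * g j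
      = ((f i * g j : ℝ) : ℂ) * ((starRingEnd ℂ) (M i j) * M i j) by push_cast; ring,
    Complex.conj_mul', ← Complex.ofReal_pow, ← Complex.ofReal_mul, Complex.ofReal_re]

lemma posDef_convex_comb {ι : Type*} [Fintype ι] {A₁ A₂ : Matrix ι ι ℂ}
    (hA₁ : A₁.PosDef) (hA₂ : A₂.PosDef) {α : ℝ} (hα0 : 0 ≤ α) (hα1 : α ≤ 1) :
    (α • A₁ + (1 - α) • A₂).PosDef := by
  rcases hα1.lt_or_eq with hα | rfl
  · exact PosDef.posSemidef_add (hA₁.posSemidef.smul hα0) (hA₂.smul (sub_pos.2 hα))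
  · simpa using hA₁

section

variable {n : ℕ} {A B : Matrix (Fin n) (Fin n) ℂ}

section Spectral

lemma mpow_of_isHermitian (hA : A.IsHermitian) (q : ℝ) :
    mpow A q = (hA.eigenvectorUnitary : Matrix (Fin n) (Fin n) ℂ) *
      diagonal (fun i => ((hA.eigenvalues i ^ q : ℝ) : ℂ)) *
      star (hA.eigenvectorUnitary : Matrix (Fin n) (Fin n) ℂ) := by
  rw [mpow, dif_pos hA]

lemma mpow_zero_of_isHermitian (hA : A.IsHermitian) : mpow A 0 = 1 := by
  simp [mpow_of_isHermitian hA]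

lemma mpow_one_of_isHermitian (hA : A.IsHermitian) : mpow A 1 = A := by
  conv_rhs => rw [hA.spectral_theorem]
  simp [mpow_of_isHermitian hA, Function.comp_def]

noncomputable def eigenCoord (hA : A.IsHermitian) (hB : B.IsHermitian)
    (K : Matrix (Fin n) (Fin n) ℂ) : Matrix (Fin n) (Fin n) ℂ :=
  star (hA.eigenvectorUnitary : Matrix (Fin n) (Fin n) ℂ) * K * hB.eigenvectorUnitary

lemma eigenCoord_add (hA : A.IsHermitian) (hB : B.IsHermitian) (X Y : Matrix (Fin n) (Fin n) ℂ) :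
    eigenCoord hA hB (X + Y) = eigenCoord hA hB X + eigenCoord hA hB Y := by
  simp only [eigenCoord, Matrix.mul_add, Matrix.add_mul]

lemma eigenCoord_conj (hA : A.IsHermitian) (hB : B.IsHermitian) (W : Matrix (Fin n) (Fin n) ℂ) :
    eigenCoord hA hB ((hA.eigenvectorUnitary : Matrix (Fin n) (Fin n) ℂ) * W *
      star (hB.eigenvectorUnitary : Matrix (Fin n) (Fin n) ℂ)) = W := by
  simp only [eigenCoord, Matrix.mul_assoc, Unitary.star_mul_self_of_mem hB.eigenvectorUnitary.2,
    Matrix.mul_one]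
  simp only [← Matrix.mul_assoc, Unitary.star_mul_self_of_mem hA.eigenvectorUnitary.2,
    Matrix.one_mul]

lemma conj_eigenCoord (hA : A.IsHermitian) (hB : B.IsHermitian) (K : Matrix (Fin n) (Fin n) ℂ) :
    (hA.eigenvectorUnitary : Matrix (Fin n) (Fin n) ℂ) * eigenCoord hA hB K *
      star (hB.eigenvectorUnitary : Matrix (Fin n) (Fin n) ℂ) = K := by
  simp only [eigenCoord, Matrix.mul_assoc, Unitary.mul_star_self_of_mem hB.eigenvectorUnitary.2,
    Matrix.mul_one]
  simp only [← Matrix.mul_assoc, Unitary.mul_star_self_of_mem hA.eigenvectorUnitary.2,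
    Matrix.one_mul]

lemma re_trace_mpow_sandwich (hA : A.IsHermitian) (hB : B.IsHermitian)
    (K : Matrix (Fin n) (Fin n) ℂ) (q r : ℝ) :
    (trace (Kᴴ * mpow A q * K * mpow B r)).re
      = ∑ i, ∑ j, hA.eigenvalues i ^ q * hB.eigenvalues j ^ r * ‖eigenCoord hA hB K i j‖ ^ 2 := by
  rw [← re_trace_conjTranspose_mul_diagonal_mul_mul_diagonal, mpow_of_isHermitian hA,
    mpow_of_isHermitian hB, eigenCoord]
  simp only [star_eq_conjTranspose, conjTranspose_mul, conjTranspose_conjTranspose,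
    Matrix.mul_assoc]
  rw [trace_mul_comm (hB.eigenvectorUnitary : Matrix (Fin n) (Fin n) ℂ)ᴴ]
  simp only [Matrix.mul_assoc]

end Spectral

section ParallelSum

variable {s : ℝ}

lemma re_trace_conjTranspose_mul_self_mul (hA : A.IsHermitian) (hB : B.IsHermitian)
    (X : Matrix (Fin n) (Fin n) ℂ) :
    (trace (Xᴴ * X * B)).re = ∑ i, ∑ j, hB.eigenvalues j * ‖eigenCoord hA hB X i j‖ ^ 2 := by
  simpa [mpow_zero_of_isHermitian hA, mpow_one_of_isHermitian hB] using
    re_trace_mpow_sandwich hA hB X 0 1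

lemma re_trace_conjTranspose_mul_mul_self (hA : A.IsHermitian) (hB : B.IsHermitian)
    (Y : Matrix (Fin n) (Fin n) ℂ) :
    (trace (Yᴴ * A * Y)).re = ∑ i, ∑ j, hA.eigenvalues i * ‖eigenCoord hA hB Y i j‖ ^ 2 := by
  simpa [mpow_zero_of_isHermitian hB, mpow_one_of_isHermitian hA] using
    re_trace_mpow_sandwich hA hB Y 1 0

-- `a * b / (a + s * b)` is the parallel sum of `b` and `a / s`.
noncomputable def parallelSumForm (hA : A.IsHermitian) (hB : B.IsHermitian)
    (K : Matrix (Fin n) (Fin n) ℂ) (s : ℝ) : ℝ :=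
  ∑ i, ∑ j, hA.eigenvalues i * hB.eigenvalues j / (hA.eigenvalues i + s * hB.eigenvalues j) *
    ‖eigenCoord hA hB K i j‖ ^ 2

noncomputable def splitEnergy (A B : Matrix (Fin n) (Fin n) ℂ) (s : ℝ)
    (X Y : Matrix (Fin n) (Fin n) ℂ) : ℝ :=
  (trace (Xᴴ * X * B)).re + s⁻¹ * (trace (Yᴴ * A * Y)).re

lemma splitEnergy_eq_sum (hA : A.IsHermitian) (hB : B.IsHermitian) (s : ℝ)
    (X Y : Matrix (Fin n) (Fin n) ℂ) :
    splitEnergy A B s X Y = ∑ i, ∑ j, (hB.eigenvalues j * ‖eigenCoord hA hB X i j‖ ^ 2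
      + s⁻¹ * (hA.eigenvalues i * ‖eigenCoord hA hB Y i j‖ ^ 2)) := by
  simp only [splitEnergy, re_trace_conjTranspose_mul_self_mul hA hB,
    re_trace_conjTranspose_mul_mul_self hA hB, Finset.mul_sum, ← Finset.sum_add_distrib]

lemma parallelSumForm_le_splitEnergy (hA : A.PosDef) (hB : B.PosDef) (hs : 0 < s)
    {K X Y : Matrix (Fin n) (Fin n) ℂ} (hXY : X + Y = K) :
    parallelSumForm hA.isHermitian hB.isHermitian K s ≤ splitEnergy A B s X Y := by
  rw [splitEnergy_eq_sum hA.isHermitian hB.isHermitian, parallelSumForm, ← hXY,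
    eigenCoord_add]
  gcongr with i _ j _
  exact parallel_sum_mul_norm_add_sq_le (hA.eigenvalues_pos i) (hB.eigenvalues_pos j) hs _ _

lemma exists_splitEnergy_eq_parallelSumForm (hA : A.PosDef) (hB : B.PosDef) (hs : 0 < s)
    (K : Matrix (Fin n) (Fin n) ℂ) :
    ∃ X Y, X + Y = K ∧
      splitEnergy A B s X Y = parallelSumForm hA.isHermitian hB.isHermitian K s := by
  set a := hA.isHermitian.eigenvalues
  set b := hB.isHermitian.eigenvalues
  set U := (hA.isHermitian.eigenvectorUnitary : Matrix (Fin n) (Fin n) ℂ)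
  set V := (hB.isHermitian.eigenvectorUnitary : Matrix (Fin n) (Fin n) ℂ)
  set M := eigenCoord hA.isHermitian hB.isHermitian K
  let X' : Matrix (Fin n) (Fin n) ℂ := of fun i j => (a i / (a i + s * b j)) • M i j
  let Y' : Matrix (Fin n) (Fin n) ℂ := of fun i j => (s * b j / (a i + s * b j)) • M i j
  have hsplit : X' + Y' = M := by
    ext i j
    have : 0 < a i + s * b j := by
      have := hA.eigenvalues_pos i; have := hB.eigenvalues_pos j; positivity
    simp only [Matrix.add_apply, of_apply, X', Y', ← add_smul, ← add_div, div_self this.ne',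
      one_smul]
  refine ⟨U * X' * star V, U * Y' * star V, ?_, ?_⟩
  · rw [← Matrix.add_mul, ← Matrix.mul_add, hsplit, conj_eigenCoord]
  · rw [splitEnergy_eq_sum hA.isHermitian hB.isHermitian, eigenCoord_conj, eigenCoord_conj,
      parallelSumForm]
    refine Finset.sum_congr rfl fun i _ => Finset.sum_congr rfl fun j _ => ?_
    exact parallel_sum_mul_norm_sq_eq (hA.eigenvalues_pos i) (hB.eigenvalues_pos j) hs (M i j)

lemma splitEnergy_convex_comb (A₁ A₂ B₁ B₂ : Matrix (Fin n) (Fin n) ℂ) (α β s : ℝ)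
    (X Y : Matrix (Fin n) (Fin n) ℂ) :
    splitEnergy (α • A₁ + β • A₂) (α • B₁ + β • B₂) s X Y
      = α * splitEnergy A₁ B₁ s X Y + β * splitEnergy A₂ B₂ s X Y := by
  simp only [splitEnergy, Matrix.mul_add, Matrix.add_mul, Matrix.mul_smul, Matrix.smul_mul,
    trace_add, trace_smul, Complex.add_re, Complex.smul_re, smul_eq_mul]
  ring

lemma parallelSumForm_concave {A₁ A₂ B₁ B₂ : Matrix (Fin n) (Fin n) ℂ}
    (hA₁ : A₁.PosDef) (hA₂ : A₂.PosDef) (hB₁ : B₁.PosDef) (hB₂ : B₂.PosDef)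
    {α : ℝ} (hα0 : 0 ≤ α) (hα1 : α ≤ 1) (hs : 0 < s) (K : Matrix (Fin n) (Fin n) ℂ) :
    α * parallelSumForm hA₁.isHermitian hB₁.isHermitian K s
        + (1 - α) * parallelSumForm hA₂.isHermitian hB₂.isHermitian K s
      ≤ parallelSumForm (posDef_convex_comb hA₁ hA₂ hα0 hα1).isHermitian
          (posDef_convex_comb hB₁ hB₂ hα0 hα1).isHermitian K s := by
  obtain ⟨X, Y, hXY, hmin⟩ := exists_splitEnergy_eq_parallelSumForm
    (posDef_convex_comb hA₁ hA₂ hα0 hα1) (posDef_convex_comb hB₁ hB₂ hα0 hα1) hs K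
  rw [← hmin, splitEnergy_convex_comb]
  exact add_le_add
    (mul_le_mul_of_nonneg_left (parallelSumForm_le_splitEnergy hA₁ hB₁ hs hXY) hα0)
    (mul_le_mul_of_nonneg_left (parallelSumForm_le_splitEnergy hA₂ hB₂ hs hXY)
      (sub_nonneg.2 hα1))

end ParallelSum

section Integral

open Real

variable {p d e : ℝ}

lemma rpow_sub_one_mul_parallel_sum_eq (hp : p ∈ Ioo 0 1) (hd : 0 < d) (he : 0 < e) {s : ℝ}
    (hs : 0 < s) : s ^ (p - 1) * (d * e / (d + s * e)) = rpowIntegrand₀₁ p s (d / e) * e := by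
  rw [rpowIntegrand₀₁_eq_pow_div hp hs.le (by positivity)]
  field_simp
  ring

lemma integrableOn_rpow_sub_one_mul_parallel_sum (hp : p ∈ Ioo 0 1) (hd : 0 < d) (he : 0 < e) :
    IntegrableOn (fun s => s ^ (p - 1) * (d * e / (d + s * e))) (Ioi 0) :=
  IntegrableOn.congr_fun ((integrableOn_rpowIntegrand₀₁_Ioi hp (div_pos hd he).le).mul_const e)
    (fun _ hs => (rpow_sub_one_mul_parallel_sum_eq hp hd he hs).symm) measurableSet_Ioi

lemma integral_rpow_sub_one_mul_parallel_sum (hp : p ∈ Ioo 0 1) (hd : 0 < d) (he : 0 < e) :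
    ∫ s in Ioi 0, s ^ (p - 1) * (d * e / (d + s * e))
      = (∫ t in Ioi 0, rpowIntegrand₀₁ p t 1) * (d ^ p * e ^ (1 - p)) := by
  rw [setIntegral_congr_fun measurableSet_Ioi
      (fun _ hs => rpow_sub_one_mul_parallel_sum_eq hp hd he hs),
    integral_mul_const, integral_rpowIntegrand₀₁_eq_rpow_mul_const hp (div_pos hd he).le,
    div_rpow hd.le he.le, rpow_sub he, rpow_one]
  field_simp

lemma rpow_sub_one_mul_parallelSumForm (hA : A.IsHermitian) (hB : B.IsHermitian)
    (K : Matrix (Fin n) (Fin n) ℂ) :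
    (fun s => s ^ (p - 1) * parallelSumForm hA hB K s) = fun s => ∑ i, ∑ j,
      s ^ (p - 1) * (hA.eigenvalues i * hB.eigenvalues j /
        (hA.eigenvalues i + s * hB.eigenvalues j)) * ‖eigenCoord hA hB K i j‖ ^ 2 := by
  simp only [parallelSumForm, Finset.mul_sum, mul_assoc]

lemma integrableOn_rpow_sub_one_mul_parallelSumForm (hp : p ∈ Ioo 0 1) (hA : A.PosDef)
    (hB : B.PosDef) (K : Matrix (Fin n) (Fin n) ℂ) :
    IntegrableOn (fun s => s ^ (p - 1) * parallelSumForm hA.isHermitian hB.isHermitian K s)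
      (Ioi 0) := by
  rw [rpow_sub_one_mul_parallelSumForm]
  exact integrable_finsetSum _ fun i _ => integrable_finsetSum _ fun j _ =>
    (integrableOn_rpow_sub_one_mul_parallel_sum hp (hA.eigenvalues_pos i)
      (hB.eigenvalues_pos j)).mul_const _

lemma integral_rpow_sub_one_mul_parallelSumForm (hp : p ∈ Ioo 0 1) (hA : A.PosDef)
    (hB : B.PosDef) (K : Matrix (Fin n) (Fin n) ℂ) :
    ∫ s in Ioi 0, s ^ (p - 1) * parallelSumForm hA.isHermitian hB.isHermitian K s
      = (∫ t in Ioi 0, rpowIntegrand₀₁ p t 1) *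
          (trace (Kᴴ * mpow A p * K * mpow B (1 - p))).re := by
  have hint (i j : Fin n) := (integrableOn_rpow_sub_one_mul_parallel_sum hp
    (hA.eigenvalues_pos i) (hB.eigenvalues_pos j)).mul_const (‖eigenCoord hA.isHermitian
      hB.isHermitian K i j‖ ^ 2)
  rw [rpow_sub_one_mul_parallelSumForm, re_trace_mpow_sandwich hA.isHermitian hB.isHermitian,
    Finset.mul_sum,
    integral_finsetSum _ fun i _ => integrable_finsetSum _ fun j _ => hint i j]
  refine Finset.sum_congr rfl fun i _ => ?_
  rw [Finset.mul_sum, integral_finsetSum _ fun j _ => hint i j]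
  refine Finset.sum_congr rfl fun j _ => ?_
  rw [integral_mul_const, integral_rpow_sub_one_mul_parallel_sum hp (hA.eigenvalues_pos i)
    (hB.eigenvalues_pos j)]
  ring

end Integral

lemma lieb_concavity_of_mem_Ioo {p : ℝ} (hp : p ∈ Ioo 0 1)
    {A₁ A₂ B₁ B₂ : Matrix (Fin n) (Fin n) ℂ}
    (hA₁ : A₁.PosDef) (hA₂ : A₂.PosDef) (hB₁ : B₁.PosDef) (hB₂ : B₂.PosDef)
    {α : ℝ} (hα0 : 0 ≤ α) (hα1 : α ≤ 1) (K : Matrix (Fin n) (Fin n) ℂ) :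
    α * (trace (Kᴴ * mpow A₁ p * K * mpow B₁ (1 - p))).re +
        (1 - α) * (trace (Kᴴ * mpow A₂ p * K * mpow B₂ (1 - p))).re ≤
      (trace (Kᴴ * mpow (α • A₁ + (1 - α) • A₂) p * K *
        mpow (α • B₁ + (1 - α) • B₂) (1 - p))).re := by
  have hA := posDef_convex_comb hA₁ hA₂ hα0 hα1
  have hB := posDef_convex_comb hB₁ hB₂ hα0 hα1
  have hint₁ := (integrableOn_rpow_sub_one_mul_parallelSumForm hp hA₁ hB₁ K).const_mul α
  have hint₂ := (integrableOn_rpow_sub_one_mul_parallelSumForm hp hA₂ hB₂ K).const_mul (1 - α)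
  refine le_of_mul_le_mul_left ?_ (Real.integral_rpowIntegrand₀₁_one_pos hp)
  rw [mul_add, mul_left_comm _ α, mul_left_comm _ (1 - α),
    ← integral_rpow_sub_one_mul_parallelSumForm hp hA₁ hB₁,
    ← integral_rpow_sub_one_mul_parallelSumForm hp hA₂ hB₂,
    ← integral_rpow_sub_one_mul_parallelSumForm hp hA hB,
    ← integral_const_mul, ← integral_const_mul, ← integral_add hint₁ hint₂]
  refine setIntegral_mono_on (hint₁.add hint₂)
    (integrableOn_rpow_sub_one_mul_parallelSumForm hp hA hB K) measurableSet_Ioi fun s hs => ?_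
  calc α * (s ^ (p - 1) * parallelSumForm hA₁.isHermitian hB₁.isHermitian K s)
        + (1 - α) * (s ^ (p - 1) * parallelSumForm hA₂.isHermitian hB₂.isHermitian K s)
      = s ^ (p - 1) * (α * parallelSumForm hA₁.isHermitian hB₁.isHermitian K s
        + (1 - α) * parallelSumForm hA₂.isHermitian hB₂.isHermitian K s) := by ring
    _ ≤ s ^ (p - 1) * parallelSumForm hA.isHermitian hB.isHermitian K s :=
      mul_le_mul_of_nonneg_left (parallelSumForm_concave hA₁ hA₂ hB₁ hB₂ hα0 hα1 hs K)
        (Real.rpow_nonneg (le_of_lt hs) _)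

lemma re_trace_mpow_one_mpow_zero (hA : A.IsHermitian) (hB : B.IsHermitian)
    (K : Matrix (Fin n) (Fin n) ℂ) :
    (trace (Kᴴ * mpow A 1 * K * mpow B (1 - 1))).re = (trace (Kᴴ * A * K)).re := by
  rw [sub_self, mpow_one_of_isHermitian hA, mpow_zero_of_isHermitian hB, Matrix.mul_one]

lemma re_trace_conj_convex_comb (K A₁ A₂ : Matrix (Fin n) (Fin n) ℂ) (α β : ℝ) :
    (trace (Kᴴ * (α • A₁ + β • A₂) * K)).re
      = α * (trace (Kᴴ * A₁ * K)).re + β * (trace (Kᴴ * A₂ * K)).re := by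
  simp only [Matrix.mul_add, Matrix.add_mul, Matrix.mul_smul, Matrix.smul_mul, trace_add,
    trace_smul, Complex.add_re, Complex.smul_re, smul_eq_mul]

end

/-- Lieb's concavity theorem. -/
theorem stmt11 {n : ℕ} (p : ℝ) (hp0 : 0 < p) (hp1 : p ≤ 1)
    (K : Matrix (Fin n) (Fin n) ℂ)
    (A₁ A₂ B₁ B₂ : Matrix (Fin n) (Fin n) ℂ)
    (hA₁ : A₁.PosDef) (hA₂ : A₂.PosDef) (hB₁ : B₁.PosDef) (hB₂ : B₂.PosDef)
    (α : ℝ) (hα0 : 0 ≤ α) (hα1 : α ≤ 1) :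
    α * (Matrix.trace (Kᴴ * mpow A₁ p * K * mpow B₁ (1 - p))).re +
        (1 - α) * (Matrix.trace (Kᴴ * mpow A₂ p * K * mpow B₂ (1 - p))).re ≤
      (Matrix.trace (Kᴴ * mpow (α • A₁ + (1 - α) • A₂) p * K *
        mpow (α • B₁ + (1 - α) • B₂) (1 - p))).re := by
  rcases hp1.lt_or_eq with hp1 | rfl
  · exact lieb_concavity_of_mem_Ioo ⟨hp0, hp1⟩ hA₁ hA₂ hB₁ hB₂ hα0 hα1 K
  · simp only [re_trace_mpow_one_mpow_zero, hA₁.isHermitian, hA₂.isHermitian, hB₁.isHermitian,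
      hB₂.isHermitian, (posDef_convex_comb hA₁ hA₂ hα0 hα1).isHermitian,
      (posDef_convex_comb hB₁ hB₂ hα0 hα1).isHermitian, re_trace_conj_convex_comb, le_refl]
end
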